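/- Let φ : ℕ → [1, ∞) be nondecreasing with limsup_n log(n+2)/φ(n) = ∞. Then there exist functions g_k with ‖g_k‖_{H_1} ≤ 1 and indices q_k such that ∫_G |S_{q_k} g_k| / φ(q_k) dμ → ∞; i.e., the weight log(n+2) in the maximal operator sup_n |S_n f|/log(n+2) on H_1(G) is sharp. -/

import Mathlib

open MeasureTheory ENNReal Filter
open scoped Classical

noncomputable section

instance : TopologicalSpace (ZMod 2) := ⊥
instance : DiscreteTopology (ZMod 2) := ⟨rfl⟩
instance : MeasurableSpace (ZMod 2) := ⊤
instance : BorelSpace (ZMod 2) := ⟨borel_eq_top_of_discrete.symm⟩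
instance : IsTopologicalAddGroup (ZMod 2) where
  continuous_add := continuous_of_discreteTopology
  continuous_neg := continuous_of_discreteTopology

/-- The dyadic group `G = (ℤ/2)^ℕ`. -/
abbrev G2 : Type := ℕ → ZMod 2

/-- Normalized Haar (probability) measure on `G2`. -/
def muG : Measure G2 :=
  Measure.addHaarMeasure ⟨⟨Set.univ, isCompact_univ⟩, by
    rw [interior_univ]; exact Set.univ_nonempty⟩

/-- Rademacher functions. -/
def rad (k : ℕ) (x : G2) : ℝ := (-1 : ℝ) ^ ((x k).val)

/-- Walsh–Paley functions. -/
def walsh (n : ℕ) (x : G2) : ℝ :=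
  ∏ k ∈ Finset.range n, if n.testBit k then rad k x else 1

/-- Walsh–Dirichlet kernels. -/
def dirichlet (n : ℕ) (x : G2) : ℝ := ∑ k ∈ Finset.range n, walsh k x

/-- The cylinder sets `I_n`. -/
def cyl (n : ℕ) : Set G2 := {x | ∀ i < n, x i = 0}

/-- Walsh–Fourier coefficients. -/
def fhat (f : G2 → ℝ) (k : ℕ) : ℝ := ∫ x, f x * walsh k x ∂muG

/-- Walsh–Fourier partial sums of a function. -/
def funS (f : G2 → ℝ) (n : ℕ) (x : G2) : ℝ :=
  ∑ k ∈ Finset.range n, fhat f k * walsh k x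

/-- Partial sums of the Walsh series of a dyadic martingale given by coefficients `c`. -/
def mS (c : ℕ → ℝ) (n : ℕ) (x : G2) : ℝ := ∑ k ∈ Finset.range n, c k * walsh k x

/-- The martingale maximal function. -/
def mMax (c : ℕ → ℝ) (x : G2) : ℝ≥0∞ := ⨆ n : ℕ, (‖mS c (2 ^ n) x‖₊ : ℝ≥0∞)

/-- The martingale Hardy space quasi-norm `H_p`. -/
def mHp (p : ℝ) (c : ℕ → ℝ) : ℝ≥0∞ := (∫⁻ x, (mMax c x) ^ p ∂muG) ^ (1 / p)

/-- The maximal function of an integrable function. -/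
def funMax (f : G2 → ℝ) (x : G2) : ℝ≥0∞ := ⨆ n : ℕ, (‖funS f (2 ^ n) x‖₊ : ℝ≥0∞)

/-- The Hardy space quasi-norm of an integrable function. -/
def funHp (p : ℝ) (f : G2 → ℝ) : ℝ≥0∞ := (∫⁻ x, (funMax f x) ^ p ∂muG) ^ (1 / p)

/-- Weak `L^p` quasi-norm. -/
def weakLp (p : ℝ) (f : G2 → ℝ) : ℝ≥0∞ :=
  ⨆ t : NNReal, (t : ℝ≥0∞) * (muG {x | (t : ℝ) < |f x|}) ^ (1 / p)


/-!
The witness at scale `N` is the dyadic block `g = D_{2^(2N+1)} - D_{2^(2N)}`: its martingale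
maximal function is `4^N` on `cyl (2N)`, so `‖g‖_{H_1} ≤ 1`. Its partial sum at
`q = ∑_{l ≤ N} 4^l` is `r_{2N} · D_{q'}` with `q' = ∑_{l < N} 4^l`, and for each `j < N` the
kernel `D_{q'}` has size at least `(2/3) 4^j` on the annulus `cyl (2j) \ cyl (2j+2)` of measure
`(3/4) 4^(-j)`. Hence `∫ |S_q g| ≥ N/2`, which is comparable to `log q`. Given `k`, pick `n` with
`log (n+2) ≥ k φ(n)` and the largest `N` with `4^(N+1) ≤ n`; then `q ≤ n`, so by monotonicity
`φ(q) ≤ φ(n) ≤ 12 N / k` and the ratio is at least `k / 24`.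
-/

lemma abs_rad (m : ℕ) (x : G2) : |rad m x| = 1 := by
  simp [rad, abs_pow]

lemma nnnorm_rad (m : ℕ) (x : G2) : ‖rad m x‖₊ = 1 := by
  ext; simp [abs_rad]

lemma rad_eq_ite (m : ℕ) (x : G2) : rad m x = if x m = 0 then 1 else -1 := by
  unfold rad
  obtain h | h : x m = 0 ∨ x m = 1 := by generalize x m = a; decide +revert
  · simp [h]
  · simp [h, ZMod.val_one]

lemma walsh_eq_prod_range {n M : ℕ} (h : n < 2 ^ M) (x : G2) :
    walsh n x = ∏ k ∈ Finset.range M, if n.testBit k then rad k x else 1 := by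
  have hvanish : ∀ k, n ≤ k ∨ M ≤ k → (if n.testBit k then rad k x else 1) = 1 := by
    intro k hk
    rw [Nat.testBit_lt_two_pow, if_neg Bool.false_ne_true]
    rcases hk with hk | hk
    · exact Nat.lt_two_pow_self.trans_le (Nat.pow_le_pow_right two_pos hk)
    · exact h.trans_le (Nat.pow_le_pow_right two_pos hk)
  rcases le_total n M with hnM | hMn
  · exact Finset.prod_subset (Finset.range_subset_range.2 hnM)
      fun k _ hk => hvanish k (.inl (by simpa using hk))
  · exact (Finset.prod_subset (Finset.range_subset_range.2 hMn)
      fun k _ hk => hvanish k (.inr (by simpa using hk))).symm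

lemma walsh_two_pow_add {m r : ℕ} (h : r < 2 ^ m) (x : G2) :
    walsh (2 ^ m + r) x = rad m x * walsh r x := by
  have hlt : 2 ^ m + r < 2 ^ (m + 1) := by rw [pow_succ]; omega
  rw [walsh_eq_prod_range hlt, Finset.prod_range_succ, walsh_eq_prod_range h, mul_comm,
    Nat.testBit_two_pow_add_eq, Nat.testBit_lt_two_pow h]
  congr 1
  refine Finset.prod_congr rfl fun k hk => ?_
  rw [Nat.testBit_two_pow_add_gt (Finset.mem_range.1 hk)]

lemma abs_walsh_le (n : ℕ) (x : G2) : |walsh n x| ≤ 1 := by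
  rw [walsh, Finset.abs_prod]
  refine Finset.prod_le_one (fun _ _ => abs_nonneg _) fun k _ => ?_
  split_ifs <;> simp [abs_rad]

lemma abs_dirichlet_le (n : ℕ) (x : G2) : |dirichlet n x| ≤ n :=
  (Finset.abs_sum_le_sum_abs _ _).trans <|
    (Finset.sum_le_sum fun k _ => abs_walsh_le k x).trans_eq (by simp)

lemma dirichlet_two_pow_add {m r : ℕ} (h : r ≤ 2 ^ m) (x : G2) :
    dirichlet (2 ^ m + r) x = dirichlet (2 ^ m) x + rad m x * dirichlet r x := by
  rw [dirichlet, Finset.sum_range_add, dirichlet, dirichlet, Finset.mul_sum]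
  congr 1
  exact Finset.sum_congr rfl fun k hk =>
    walsh_two_pow_add ((Finset.mem_range.1 hk).trans_le h) x

lemma mem_cyl_succ {m : ℕ} {x : G2} : x ∈ cyl (m + 1) ↔ x ∈ cyl m ∧ x m = 0 := by
  simp only [cyl, Set.mem_ofPred_eq, Nat.lt_succ_iff_lt_or_eq, or_imp, forall_and,
    forall_eq]

lemma cyl_anti : Antitone cyl :=
  fun _ _ hmn _ hx i hi => hx i (hi.trans_le hmn)

lemma dirichlet_two_pow (m : ℕ) (x : G2) :
    dirichlet (2 ^ m) x = (cyl m).indicator (fun _ => 2 ^ m) x := by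
  induction m with
  | zero => simp [dirichlet, walsh, cyl]
  | succ m ih =>
    have hsplit : dirichlet (2 ^ (m + 1)) x = (1 + rad m x) * dirichlet (2 ^ m) x := by
      rw [pow_succ, mul_two, dirichlet_two_pow_add le_rfl]; ring
    rw [hsplit, ih, rad_eq_ite]
    by_cases hm : x m = 0 <;> by_cases hc : x ∈ cyl m <;>
      simp [hm, hc, mem_cyl_succ, pow_succ, mul_comm, one_add_one_eq_two]

def repunit4 (N : ℕ) : ℕ := ∑ l ∈ Finset.range N, 4 ^ l

lemma repunit4_succ (N : ℕ) : repunit4 (N + 1) = 4 ^ N + repunit4 N := by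
  rw [repunit4, Finset.sum_range_succ, add_comm, repunit4]

lemma three_mul_repunit4_add_one (N : ℕ) : 3 * repunit4 N + 1 = 4 ^ N := by
  induction N with
  | zero => rfl
  | succ N ih => rw [repunit4_succ, pow_succ]; omega

lemma four_pow_eq_two_pow (N : ℕ) : (4 : ℕ) ^ N = 2 ^ (2 * N) := by
  rw [pow_mul]; norm_num

lemma repunit4_le_two_pow (N : ℕ) : repunit4 N ≤ 2 ^ (2 * N) := by
  have := three_mul_repunit4_add_one N
  rw [four_pow_eq_two_pow] at this; omega

lemma dirichlet_repunit4_succ (N : ℕ) (x : G2) :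
    dirichlet (repunit4 (N + 1)) x
      = dirichlet (2 ^ (2 * N)) x + rad (2 * N) x * dirichlet (repunit4 N) x := by
  rw [repunit4_succ, four_pow_eq_two_pow, dirichlet_two_pow_add (repunit4_le_two_pow N)]

/-- Outside `cyl (2 * (j + 1))` the kernels `D_{4^l}`, `l > j`, vanish, so the later blocks only
flip the sign. -/
lemma abs_dirichlet_repunit4_of_notMem {j N : ℕ} (hjN : j < N) {x : G2}
    (hx : x ∉ cyl (2 * (j + 1))) :
    |dirichlet (repunit4 N) x| = |dirichlet (repunit4 (j + 1)) x| := by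
  induction N, hjN using Nat.le_induction with
  | base => rfl
  | succ N hjN ih =>
    have hxN : x ∉ cyl (2 * N) := fun h => hx (cyl_anti (by omega) h)
    rw [dirichlet_repunit4_succ, dirichlet_two_pow, Set.indicator_of_notMem hxN, zero_add,
      abs_mul, abs_rad, one_mul, ih]

lemma le_abs_dirichlet_repunit4_succ {j : ℕ} {x : G2} (hx : x ∈ cyl (2 * j)) :
    2 * 4 ^ j / 3 ≤ |dirichlet (repunit4 (j + 1)) x| := by
  have hR : 3 * (repunit4 j : ℝ) + 1 = 4 ^ j := by exact_mod_cast three_mul_repunit4_add_one j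
  have htail : |rad (2 * j) x * dirichlet (repunit4 j) x| ≤ repunit4 j := by
    rw [abs_mul, abs_rad, one_mul]; exact abs_dirichlet_le _ _
  have h4 : (2 : ℝ) ^ (2 * j) = 4 ^ j := by rw [pow_mul]; norm_num
  rw [dirichlet_repunit4_succ, dirichlet_two_pow, Set.indicator_of_mem hx, h4]
  have := abs_sub_abs_le_abs_add ((4 : ℝ) ^ j) (rad (2 * j) x * dirichlet (repunit4 j) x)
  rw [abs_of_pos (by positivity)] at this
  linarith

lemma le_abs_dirichlet_repunit4 {j N : ℕ} (hjN : j < N) {x : G2}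
    (hx : x ∈ cyl (2 * j) \ cyl (2 * (j + 1))) :
    2 * 4 ^ j / 3 ≤ |dirichlet (repunit4 N) x| :=
  (abs_dirichlet_repunit4_of_notMem hjN hx.2).symm ▸ le_abs_dirichlet_repunit4_succ hx.1

instance : muG.IsAddLeftInvariant := Measure.isAddLeftInvariant_addHaarMeasure _

instance : IsProbabilityMeasure muG := ⟨Measure.addHaarMeasure_self⟩

lemma measurableSet_cyl (n : ℕ) : MeasurableSet (cyl n) := by
  unfold cyl; measurability

/-- `cyl n` is the kernel of the restriction to the first `n` coordinates, a subgroup of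
index `2 ^ n`. -/
lemma muG_cyl (n : ℕ) : muG (cyl n) = (2 ^ n)⁻¹ := by
  let restrict := (LinearMap.funLeft (ZMod 2) (ZMod 2) (Fin.val : Fin n → ℕ)).toAddMonoidHom
  have hker : (restrict.ker : Set G2) = cyl n := by
    ext x; simp [restrict, cyl, funext_iff, Fin.forall_iff, LinearMap.funLeft]
  have hindex : restrict.ker.index = 2 ^ n := by
    rw [AddSubgroup.index_ker, AddMonoidHom.range_eq_top.2
      (LinearMap.funLeft_surjective_of_injective (ZMod 2) (ZMod 2) _ Fin.val_injective)]
    simp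
  have : restrict.ker.FiniteIndex := ⟨by rw [hindex]; positivity⟩
  have h := restrict.ker.index_mul_measure (hker ▸ measurableSet_cyl n) muG
  rw [hindex, hker, measure_univ] at h
  exact ENNReal.eq_inv_of_mul_eq_one_left (by rw [mul_comm]; exact_mod_cast h)

lemma measureReal_cyl (n : ℕ) : muG.real (cyl n) = (2 ^ n)⁻¹ := by
  simp [measureReal_def, muG_cyl]

lemma sum_mul_measure_le_lintegral {α ι : Type*} [MeasurableSpace α] {μ : Measure α}
    {s : Finset ι} {A : ι → Set α} (hd : (s : Set ι).PairwiseDisjoint A)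
    (hA : ∀ i ∈ s, MeasurableSet (A i)) {f : α → ℝ≥0∞} {c : ι → ℝ≥0∞}
    (hf : ∀ i ∈ s, ∀ x ∈ A i, c i ≤ f x) :
    ∑ i ∈ s, c i * μ (A i) ≤ ∫⁻ x, f x ∂μ :=
  calc ∑ i ∈ s, c i * μ (A i) = ∑ i ∈ s, ∫⁻ _ in A i, c i ∂μ := by simp
    _ ≤ ∑ i ∈ s, ∫⁻ x in A i, f x ∂μ :=
      Finset.sum_le_sum fun i hi => setLIntegral_mono' (hA i hi) (hf i hi)
    _ = ∫⁻ x in ⋃ i ∈ s, A i, f x ∂μ := (lintegral_biUnion_finset hd hA f).symm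
    _ ≤ ∫⁻ x, f x ∂μ := setLIntegral_le_lintegral _ _

lemma measureReal_cyl_diff (j : ℕ) :
    muG.real (cyl (2 * j) \ cyl (2 * (j + 1))) = 3 / 4 * (4 ^ j)⁻¹ := by
  rw [measureReal_sdiff (cyl_anti (by omega)) (measurableSet_cyl _), measureReal_cyl,
    measureReal_cyl, mul_add, pow_add, pow_mul, pow_mul]
  norm_num
  ring

lemma lintegral_abs_dirichlet_repunit4_ge (N : ℕ) :
    ENNReal.ofReal (N / 2) ≤ ∫⁻ x, (‖dirichlet (repunit4 N) x‖₊ : ℝ≥0∞) ∂muG := by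
  set A : ℕ → Set G2 := fun j => cyl (2 * j) \ cyl (2 * (j + 1))
  have hd : Pairwise (Function.onFun Disjoint A) := (pairwise_disjoint_on A).2 fun i j hij =>
    Set.disjoint_left.2 fun x hi hj => hi.2 (cyl_anti (by omega) hj.1)
  have hterm : ∀ j, ENNReal.ofReal (2 * 4 ^ j / 3) * muG (A j) = ENNReal.ofReal (1 / 2) := by
    intro j
    rw [← ofReal_measureReal, measureReal_cyl_diff, ← ENNReal.ofReal_mul (by positivity)]
    congr 1
    field_simp
    norm_num
  calc ENNReal.ofReal (N / 2)
        = ∑ j ∈ Finset.range N, ENNReal.ofReal (2 * 4 ^ j / 3) * muG (A j) := by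
        simp only [hterm, Finset.sum_const, Finset.card_range, nsmul_eq_mul]
        rw [← ENNReal.ofReal_natCast, ← ENNReal.ofReal_mul (by positivity)]
        ring_nf
    _ ≤ _ := sum_mul_measure_le_lintegral (hd.set_pairwise _)
        (fun j _ => (measurableSet_cyl _).diff (measurableSet_cyl _)) fun j hj x hx => by
          rw [← enorm_eq_nnnorm, Real.enorm_eq_ofReal_abs]
          exact ENNReal.ofReal_le_ofReal
            (le_abs_dirichlet_repunit4 (Finset.mem_range.1 hj) hx)

def dyadicBlock (m : ℕ) : ℕ → ℝ := (Set.Ico (2 ^ m) (2 ^ (m + 1))).indicator 1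

lemma mS_dyadicBlock_of_le {m t : ℕ} (ht : t ≤ 2 ^ m) (x : G2) :
    mS (dyadicBlock m) t x = 0 :=
  Finset.sum_eq_zero fun k hk => by
    simp [dyadicBlock, (Finset.mem_range.1 hk).trans_le ht]

lemma mS_dyadicBlock_two_pow_add {m r : ℕ} (hr : r ≤ 2 ^ m) (x : G2) :
    mS (dyadicBlock m) (2 ^ m + r) x = rad m x * dirichlet r x := by
  rw [mS, Finset.sum_range_add, ← mS, mS_dyadicBlock_of_le le_rfl, zero_add, dirichlet,
    Finset.mul_sum]
  refine Finset.sum_congr rfl fun i hi => ?_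
  have hi : i < 2 ^ m := (Finset.mem_range.1 hi).trans_le hr
  rw [walsh_two_pow_add hi, dyadicBlock, Set.indicator_of_mem (by simp [pow_succ]; omega),
    Pi.one_apply, one_mul]

lemma mS_dyadicBlock_of_ge {m t : ℕ} (ht : 2 ^ (m + 1) ≤ t) (x : G2) :
    mS (dyadicBlock m) t x = rad m x * dirichlet (2 ^ m) x := by
  obtain ⟨s, rfl⟩ := Nat.exists_eq_add_of_le ht
  rw [mS, Finset.sum_range_add, ← mS, pow_succ, mul_two, mS_dyadicBlock_two_pow_add le_rfl,
    add_eq_left]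
  exact Finset.sum_eq_zero fun k _ => by simp [dyadicBlock, pow_succ, mul_two]

lemma enorm_mS_dyadicBlock_two_pow_le (m n : ℕ) (x : G2) :
    (‖mS (dyadicBlock m) (2 ^ n) x‖₊ : ℝ≥0∞) ≤ (cyl m).indicator (fun _ => 2 ^ m) x := by
  rcases le_or_gt n m with hnm | hmn
  · rw [mS_dyadicBlock_of_le (Nat.pow_le_pow_right two_pos hnm)]; simp
  · rw [mS_dyadicBlock_of_ge (Nat.pow_le_pow_right two_pos hmn), nnnorm_mul, dirichlet_two_pow]
    by_cases hx : x ∈ cyl m <;> simp [hx, nnnorm_rad]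

lemma mHp_one_dyadicBlock_le (m : ℕ) : mHp 1 (dyadicBlock m) ≤ 1 :=
  calc mHp 1 (dyadicBlock m) = ∫⁻ x, mMax (dyadicBlock m) x ∂muG := by simp [mHp]
    _ ≤ ∫⁻ x, (cyl m).indicator (fun _ => 2 ^ m) x ∂muG :=
      lintegral_mono fun x => iSup_le fun n => enorm_mS_dyadicBlock_two_pow_le m n x
    _ = 1 := by
      rw [lintegral_indicator_const (measurableSet_cyl m), muG_cyl,
        ENNReal.mul_inv_cancel (by positivity) (by simp)]

lemma mS_dyadicBlock_repunit4 (N : ℕ) (x : G2) :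
    mS (dyadicBlock (2 * N)) (repunit4 (N + 1)) x = rad (2 * N) x * dirichlet (repunit4 N) x := by
  rw [repunit4_succ, four_pow_eq_two_pow, mS_dyadicBlock_two_pow_add (repunit4_le_two_pow N)]

lemma lintegral_mS_dyadicBlock_repunit4_ge (N : ℕ) :
    ENNReal.ofReal (N / 2)
      ≤ ∫⁻ x, (‖mS (dyadicBlock (2 * N)) (repunit4 (N + 1)) x‖₊ : ℝ≥0∞) ∂muG := by
  simpa only [mS_dyadicBlock_repunit4, nnnorm_mul, nnnorm_rad, one_mul]
    using lintegral_abs_dirichlet_repunit4_ge N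

lemma frequently_le_of_limsup_ofReal_eq_top {α : Type*} {f : Filter α} {u : α → ℝ}
    (h : f.limsup (fun a => ENNReal.ofReal (u a)) = ⊤) (M : ℝ) : ∃ᶠ a in f, M ≤ u a :=
  (frequently_lt_of_lt_limsup (by isBoundedDefault) (h ▸ ENNReal.ofReal_lt_top)).mono
    fun _ ha => (ENNReal.ofReal_lt_ofReal_iff'.1 ha).1.le

lemma log_add_two_le {n N : ℕ} (hN : 1 ≤ N) (hn : n < 4 ^ (N + 2)) :
    Real.log (n + 2) ≤ 12 * N := by
  have hn' : (n : ℝ) + 2 ≤ 4 ^ (N + 3) := by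
    have : n + 2 ≤ 4 ^ (N + 3) := by rw [pow_succ]; omega
    exact_mod_cast this
  have hlog4 : Real.log 4 ≤ 3 := by
    linarith [Real.log_le_sub_one_of_pos (by norm_num : (0 : ℝ) < 4)]
  have hN' : (1 : ℝ) ≤ N := by exact_mod_cast hN
  calc Real.log (n + 2) ≤ Real.log (4 ^ (N + 3)) := Real.log_le_log (by positivity) hn'
    _ = (N + 3) * Real.log 4 := by rw [Real.log_pow]; push_cast; ring
    _ ≤ 12 * N := by nlinarith

lemma exists_mul_le_of_limsup_eq_top (φ : ℕ → ℝ) (hφ0 : ∀ n, 0 < φ n) (hφm : Monotone φ)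
    (hφ : Filter.atTop.limsup
        (fun n : ℕ => ENNReal.ofReal (Real.log ((n : ℝ) + 2) / φ n)) = ⊤) (k : ℕ) :
    ∃ N : ℕ, k * φ (repunit4 (N + 1)) ≤ 12 * N := by
  obtain ⟨n, hn16, hkn⟩ := (frequently_le_of_limsup_ofReal_eq_top hφ k).forall_exists_of_atTop 16
  have hL : 2 ≤ Nat.log 4 n := Nat.le_log_of_pow_le (by norm_num) (by omega)
  obtain ⟨N, hN⟩ : ∃ N, Nat.log 4 n = N + 1 := ⟨Nat.log 4 n - 1, by omega⟩
  have hlow : 4 ^ (N + 1) ≤ n := hN ▸ Nat.pow_log_le_self 4 (by omega)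
  have hupp : n < 4 ^ (N + 1 + 1) := hN ▸ Nat.lt_pow_succ_log_self (by norm_num) n
  refine ⟨N, ?_⟩
  calc (k : ℝ) * φ (repunit4 (N + 1)) ≤ k * φ n := by
        gcongr
        exact hφm (by have := three_mul_repunit4_add_one (N + 1); omega)
    _ ≤ Real.log (n + 2) := (le_div_iff₀ (hφ0 n)).1 hkn
    _ ≤ 12 * N := log_add_two_le (by omega) hupp

theorem stmt18 (φ : ℕ → ℝ) (hφ1 : ∀ n, 1 ≤ φ n) (hφm : Monotone φ)
    (hφ : Filter.atTop.limsup
        (fun n : ℕ => ENNReal.ofReal (Real.log ((n : ℝ) + 2) / φ n)) = ⊤) :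
    ∃ (g : ℕ → ℕ → ℝ) (qk : ℕ → ℕ),
      (∀ k, mHp 1 (g k) ≤ 1) ∧
      Tendsto (fun k : ℕ =>
          (∫⁻ x, (‖mS (g k) (qk k) x‖₊ : ℝ≥0∞) ∂muG) / ENNReal.ofReal (φ (qk k)))
        atTop (nhds ⊤) := by
  have hφ0 : ∀ n, 0 < φ n := fun n => one_pos.trans_le (hφ1 n)
  choose N hN using exists_mul_le_of_limsup_eq_top φ hφ0 hφm hφ
  refine ⟨fun k => dyadicBlock (2 * N k), fun k => repunit4 (N k + 1),
    fun k => mHp_one_dyadicBlock_le _, ?_⟩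
  refine tendsto_nhds_top_mono (ENNReal.tendsto_ofReal_atTop.comp
    (tendsto_natCast_atTop_atTop.atTop_div_const (by norm_num : (0 : ℝ) < 24)))
    (Eventually.of_forall fun k => ?_)
  rw [Function.comp_apply, ENNReal.le_div_iff_mul_le (.inl (by simpa using hφ0 _))
    (.inl ENNReal.ofReal_ne_top), ← ENNReal.ofReal_mul (by positivity)]
  exact (ENNReal.ofReal_le_ofReal (by linarith [hN k])).trans
    (lintegral_mS_dyadicBlock_repunit4_ge (N k))

end
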